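/- Per-round NPG suboptimality bound: Let π and π^e be policies of a finite discounted MDP, let C ≥ 0 satisfy d^{π^e}(s,a) ≤ C·d^π(s,a) for all (s,a), and let f : S×A → ℝ satisfy E_{(s,a)∼d^π}[(f(s,a) − Q^π(s,a))²] ≤ Δ. Then V^{π^e} − V^π ≤ (1/(1−γ)) · E_{(s,a)∼d^{π^e}}[f(s,a) − f(s, π(s))] + (2/(1−γ)) · √(C·Δ). -/

import Mathlib

/-! The performance difference lemma, which follows from the Bellman flow equation
`ν = (1 - γ) μ₀ + γ P_ρᵀ ν` of the discounted state occupancy, gives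
`(1 - γ) (V^{πᵉ} - V^π) = E_{d^{πᵉ}}[Q^π(s,a) - Q^π(s,π(s))]`. Replacing `Q^π` by `f` in both
terms leaves the advantage of `f` plus two errors, `E_{d^{πᵉ}}[Q^π - f]` and
`E_{s ∼ ν^{πᵉ}, a ∼ π}[f - Q^π]`. Both distributions are dominated by `C d^π`, so Cauchy–Schwarz
bounds each error by `√(C Δ)`. -/

open Finset

structure FinMDP (S A : Type*) [Fintype S] [Fintype A] where
  P : S → A → S → ℝ
  P_nonneg : ∀ s a s', 0 ≤ P s a s'
  P_sum : ∀ s a, ∑ s', P s a s' = 1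
  r : S → A → ℝ
  r_nonneg : ∀ s a, 0 ≤ r s a
  r_le_one : ∀ s a, r s a ≤ 1
  disc : ℝ
  disc_pos : 0 < disc
  disc_lt_one : disc < 1
  init : S → ℝ
  init_nonneg : ∀ s, 0 ≤ init s
  init_sum : ∑ s, init s = 1

variable {S A : Type*} [Fintype S] [Fintype A] [Nonempty S] [Nonempty A]

/-- A policy assigns to each state a probability mass function over actions. -/
def IsPolicy (π : S → A → ℝ) : Prop :=
  (∀ s a, 0 ≤ π s a) ∧ ∀ s, ∑ a, π s a = 1

/-- The Bellman operator `T^π`. -/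
noncomputable def FinMDP.bellman (M : FinMDP S A) (π f : S → A → ℝ) (s : S) (a : A) : ℝ :=
  M.r s a + M.disc * ∑ s', M.P s a s' * ∑ a', π s' a' * f s' a'

/-- `Q` is the action-value function of `π`, i.e. satisfies the Bellman equation. -/
def FinMDP.IsQ (M : FinMDP S A) (π Q : S → A → ℝ) : Prop :=
  ∀ s a, Q s a = M.bellman π Q s a

/-- The state value `V^π(s)` induced by a `Q`-function. -/
noncomputable def vOf (π Q : S → A → ℝ) (s : S) : ℝ := ∑ a, π s a * Q s a

/-- The scalar value `V^π = E_{s ∼ μ₀}[V^π(s)]`. -/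
noncomputable def FinMDP.scalarV (M : FinMDP S A) (π Q : S → A → ℝ) : ℝ :=
  ∑ s, M.init s * vOf π Q s

/-- Distribution of the state at time `t` under policy `π`. -/
noncomputable def FinMDP.stateDist (M : FinMDP S A) (π : S → A → ℝ) : ℕ → S → ℝ
  | 0 => M.init
  | (t + 1) => fun s' => ∑ s, ∑ a, FinMDP.stateDist M π t s * π s a * M.P s a s'

/-- The discounted occupancy measure `d^π(s,a) = (1-γ) ∑_t γ^t Pr^π(s_t = s, a_t = a)`. -/
noncomputable def FinMDP.occ (M : FinMDP S A) (π : S → A → ℝ) (s : S) (a : A) : ℝ :=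
  (1 - M.disc) * ∑' t : ℕ, M.disc ^ t * M.stateDist π t s * π s a

theorem abs_sum_mul_le_sqrt_of_le_mul {ι : Type*} [Fintype ι] {w d x : ι → ℝ} {C Δ : ℝ}
    (hw : ∀ i, 0 ≤ w i) (hw1 : ∑ i, w i = 1) (hC : 0 ≤ C) (hwd : ∀ i, w i ≤ C * d i)
    (hΔ : ∑ i, d i * x i ^ 2 ≤ Δ) : |∑ i, w i * x i| ≤ √(C * Δ) := by
  have hwx : ∀ i, w i * x i ^ 2 ≤ C * d i * x i ^ 2 := fun i =>
    mul_le_mul_of_nonneg_right (hwd i) (sq_nonneg _)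
  refine Real.abs_le_sqrt ?_
  calc (∑ i, w i * x i) ^ 2 ≤ (∑ i, w i) * ∑ i, C * d i * x i ^ 2 :=
        sum_sq_le_sum_mul_sum_of_sq_le_mul _ (fun i _ => hw i)
          (fun i _ => (mul_nonneg (hw i) (sq_nonneg _)).trans (hwx i)) fun i _ => by
            nlinarith [mul_le_mul_of_nonneg_left (hwx i) (hw i)]
    _ ≤ C * Δ := by
        rw [hw1, one_mul]
        simp only [mul_assoc, ← mul_sum]
        exact mul_le_mul_of_nonneg_left hΔ hC

theorem abs_sum_sum_mul_le_sqrt_of_le_mul {α β : Type*} [Fintype α] [Fintype β]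
    {w d x : α → β → ℝ} {C Δ : ℝ} (hw : ∀ i j, 0 ≤ w i j) (hw1 : ∑ i, ∑ j, w i j = 1)
    (hC : 0 ≤ C) (hwd : ∀ i j, w i j ≤ C * d i j) (hΔ : ∑ i, ∑ j, d i j * x i j ^ 2 ≤ Δ) :
    |∑ i, ∑ j, w i j * x i j| ≤ √(C * Δ) := by
  simp only [← Fintype.sum_prod_type'] at hw1 hΔ ⊢
  exact abs_sum_mul_le_sqrt_of_le_mul (fun p => hw p.1 p.2) hw1 hC (fun p => hwd p.1 p.2) hΔ

section

omit [Nonempty S] [Nonempty A]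

namespace FinMDP

variable (M : FinMDP S A) {ρ : S → A → ℝ}

theorem stateDist_nonneg (hρ : IsPolicy ρ) (t : ℕ) (s : S) : 0 ≤ M.stateDist ρ t s := by
  induction t generalizing s with
  | zero => exact M.init_nonneg s
  | succ t ih =>
    exact sum_nonneg fun s' _ => sum_nonneg fun a _ =>
      mul_nonneg (mul_nonneg (ih s') (hρ.1 s' a)) (M.P_nonneg s' a s)

theorem sum_stateDist (hρ : IsPolicy ρ) (t : ℕ) : ∑ s, M.stateDist ρ t s = 1 := by
  induction t with
  | zero => exact M.init_sum
  | succ t ih =>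
    calc ∑ s', ∑ s, ∑ a, M.stateDist ρ t s * ρ s a * M.P s a s'
        = ∑ s, ∑ a, M.stateDist ρ t s * ρ s a * ∑ s', M.P s a s' := by
          rw [sum_comm]; simp only [mul_sum]; exact sum_congr rfl fun s _ => sum_comm
      _ = 1 := by simp only [M.P_sum, mul_one, ← mul_sum, hρ.2, ih]

theorem stateDist_le_one (hρ : IsPolicy ρ) (t : ℕ) (s : S) : M.stateDist ρ t s ≤ 1 :=
  M.sum_stateDist hρ t ▸ single_le_sum (fun s _ => M.stateDist_nonneg hρ t s) (mem_univ s)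

noncomputable def stateOcc (ρ : S → A → ℝ) (s : S) : ℝ :=
  (1 - M.disc) * ∑' t : ℕ, M.disc ^ t * M.stateDist ρ t s

theorem occ_eq_stateOcc_mul (s : S) (a : A) : M.occ ρ s a = M.stateOcc ρ s * ρ s a := by
  rw [occ, stateOcc, mul_assoc, ← tsum_mul_right]

theorem hasSum_stateOcc (hρ : IsPolicy ρ) (s : S) :
    HasSum (fun t => (1 - M.disc) * (M.disc ^ t * M.stateDist ρ t s)) (M.stateOcc ρ s) := by
  have hγ := M.disc_pos.le
  refine (Summable.hasSum ?_).mul_left (1 - M.disc)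
  refine (summable_geometric_of_lt_one hγ M.disc_lt_one).of_nonneg_of_le
    (fun t => mul_nonneg (pow_nonneg hγ t) (M.stateDist_nonneg hρ t s)) fun t => ?_
  exact mul_le_of_le_one_right (pow_nonneg hγ t) (M.stateDist_le_one hρ t s)

theorem stateOcc_nonneg (hρ : IsPolicy ρ) (s : S) : 0 ≤ M.stateOcc ρ s :=
  (M.hasSum_stateOcc hρ s).nonneg fun t => mul_nonneg (sub_nonneg.2 M.disc_lt_one.le)
    (mul_nonneg (pow_nonneg M.disc_pos.le t) (M.stateDist_nonneg hρ t s))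

theorem stateOcc_flow (hρ : IsPolicy ρ) (s' : S) :
    M.stateOcc ρ s' =
      (1 - M.disc) * M.init s' + M.disc * ∑ s, ∑ a, M.stateOcc ρ s * ρ s a * M.P s a s' := by
  have hshift := (hasSum_nat_add_iff' 1).2 (M.hasSum_stateOcc hρ s')
  simp only [sum_range_one, pow_zero, one_mul, stateDist] at hshift
  have hnext := (hasSum_sum (s := univ) fun s _ => hasSum_sum (s := univ) fun a _ =>
    (M.hasSum_stateOcc hρ s).mul_right (ρ s a * M.P s a s')).mul_left M.disc
  rw [← sub_eq_iff_eq_add',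
    hshift.unique (hnext.congr_fun fun t => by simp only [mul_sum]; ring_nf)]
  simp only [mul_assoc]

theorem sum_occ_eq_stateOcc (hρ : IsPolicy ρ) (s : S) : ∑ a, M.occ ρ s a = M.stateOcc ρ s := by
  simp only [occ_eq_stateOcc_mul, ← mul_sum, hρ.2 s, mul_one]

theorem occ_nonneg (hρ : IsPolicy ρ) (s : S) (a : A) : 0 ≤ M.occ ρ s a :=
  M.occ_eq_stateOcc_mul s a ▸ mul_nonneg (M.stateOcc_nonneg hρ s) (hρ.1 s a)

theorem sum_occ_mul_sub_disc_next (hρ : IsPolicy ρ) (W : S → ℝ) :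
    ∑ s, ∑ a, M.occ ρ s a * (W s - M.disc * ∑ s', M.P s a s' * W s')
      = (1 - M.disc) * ∑ s, M.init s * W s := by
  have hflow : ∀ s', M.disc * ∑ s, ∑ a, M.stateOcc ρ s * ρ s a * M.P s a s'
      = M.stateOcc ρ s' - (1 - M.disc) * M.init s' := fun s' => by
    linarith [M.stateOcc_flow hρ s']
  calc ∑ s, ∑ a, M.occ ρ s a * (W s - M.disc * ∑ s', M.P s a s' * W s')
      = ∑ s, M.stateOcc ρ s * W s
        - ∑ s', (M.disc * ∑ s, ∑ a, M.stateOcc ρ s * ρ s a * M.P s a s') * W s' := by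
        simp only [occ_eq_stateOcc_mul, mul_sub, sum_sub_distrib]
        congr 1
        · simp only [← sum_mul, ← mul_sum, hρ.2, mul_one]
        · symm
          simp only [mul_sum, sum_mul]
          rw [sum_comm]
          refine sum_congr rfl fun s _ => ?_
          rw [sum_comm]
          exact sum_congr rfl fun a _ => sum_congr rfl fun s' _ => by ring
    _ = (1 - M.disc) * ∑ s, M.init s * W s := by
        simp only [hflow, sub_mul, sum_sub_distrib, sub_sub_cancel]
        simp only [mul_sum, mul_assoc]

theorem sum_occ (hρ : IsPolicy ρ) : ∑ s, ∑ a, M.occ ρ s a = 1 := by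
  have h := M.sum_occ_mul_sub_disc_next hρ fun _ => 1
  simp only [mul_one, M.P_sum, M.init_sum, ← sum_mul] at h
  exact mul_right_cancel₀ (sub_ne_zero.2 M.disc_lt_one.ne') (h.trans (one_mul _).symm)

theorem sum_occ_mul_vOf_sub (hρ : IsPolicy ρ) (Q : S → A → ℝ) (s : S) :
    ∑ a, M.occ ρ s a * (vOf ρ Q s - Q s a) = 0 := by
  simp only [occ_eq_stateOcc_mul, mul_sub, sum_sub_distrib, ← sum_mul, ← mul_sum, hρ.2 s, one_mul,
    mul_assoc, vOf, sub_self]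

theorem performance_difference {π πe Q Qe : S → A → ℝ} (hπe : IsPolicy πe) (hQ : M.IsQ π Q)
    (hQe : M.IsQ πe Qe) :
    (1 - M.disc) * (M.scalarV πe Qe - M.scalarV π Q)
      = ∑ s, ∑ a, M.occ πe s a * (Q s a - vOf π Q s) := by
  let W s := vOf πe Qe s - vOf π Q s
  calc (1 - M.disc) * (M.scalarV πe Qe - M.scalarV π Q)
      = ∑ s, ∑ a, M.occ πe s a * (W s - M.disc * ∑ s', M.P s a s' * W s') := by
        rw [M.sum_occ_mul_sub_disc_next hπe, scalarV, scalarV, ← sum_sub_distrib]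
        simp only [W, mul_sub]
    _ = ∑ s, ∑ a, M.occ πe s a * ((vOf πe Qe s - Qe s a) + (Q s a - vOf π Q s)) := by
        refine sum_congr rfl fun s _ => sum_congr rfl fun a _ => ?_
        rw [hQ s a, hQe s a]
        simp only [W, bellman, vOf, mul_sub, sum_sub_distrib]
        ring
    _ = ∑ s, ∑ a, M.occ πe s a * (Q s a - vOf π Q s) := by
        simp only [mul_add, sum_add_distrib, M.sum_occ_mul_vOf_sub hπe, zero_add]

theorem sum_occ_mul_sub_vOf_eq (hρ : IsPolicy ρ) (π Q f : S → A → ℝ) :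
    ∑ s, ∑ a, M.occ ρ s a * (Q s a - vOf π Q s)
      = ∑ s, ∑ a, M.occ ρ s a * (f s a - ∑ a', π s a' * f s a')
        - ∑ s, ∑ a, M.occ ρ s a * (f s a - Q s a)
        + ∑ s, ∑ a, M.stateOcc ρ s * π s a * (f s a - Q s a) := by
  simp only [← sum_sub_distrib, ← sum_add_distrib]
  refine sum_congr rfl fun s _ => ?_
  simp only [sum_add_distrib, sum_sub_distrib]
  rw [← M.sum_occ_eq_stateOcc hρ s]
  simp only [vOf, mul_sub, sum_sub_distrib, ← sum_mul, mul_assoc, ← mul_sum]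
  ring

theorem stateOcc_mul_le_of_occ_le {ρ' : S → A → ℝ} (hρ : IsPolicy ρ) (hρ' : IsPolicy ρ') {C : ℝ}
    (h : ∀ s a, M.occ ρ' s a ≤ C * M.occ ρ s a) (s : S) (a : A) :
    M.stateOcc ρ' s * ρ s a ≤ C * M.occ ρ s a := by
  rw [M.occ_eq_stateOcc_mul, ← mul_assoc, ← M.sum_occ_eq_stateOcc hρ', ← M.sum_occ_eq_stateOcc hρ,
    mul_sum]
  exact mul_le_mul_of_nonneg_right (sum_le_sum fun a _ => h s a) (hρ.1 s a)

end FinMDP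

end

/-- Per-round NPG suboptimality bound. -/
theorem stmt10 (M : FinMDP S A) (π πe Q Qe f : S → A → ℝ)
    (hπ : IsPolicy π) (hπe : IsPolicy πe) (hQ : M.IsQ π Q) (hQe : M.IsQ πe Qe)
    (C : ℝ) (hC : 0 ≤ C) (hcov : ∀ s a, M.occ πe s a ≤ C * M.occ π s a)
    (Δ : ℝ) (hΔ : ∑ s, ∑ a, M.occ π s a * (f s a - Q s a) ^ 2 ≤ Δ) :
    M.scalarV πe Qe - M.scalarV π Q ≤
      (1 / (1 - M.disc)) * (∑ s, ∑ a, M.occ πe s a * (f s a - ∑ a', π s a' * f s a'))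
      + (2 / (1 - M.disc)) * Real.sqrt (C * Δ) := by
  set T := ∑ s, ∑ a, M.occ πe s a * (f s a - ∑ a', π s a' * f s a')
  have hX1 : |∑ s, ∑ a, M.occ πe s a * (f s a - Q s a)| ≤ √(C * Δ) :=
    abs_sum_sum_mul_le_sqrt_of_le_mul (M.occ_nonneg hπe) (M.sum_occ hπe) hC hcov hΔ
  have hX2 : |∑ s, ∑ a, M.stateOcc πe s * π s a * (f s a - Q s a)| ≤ √(C * Δ) := by
    refine abs_sum_sum_mul_le_sqrt_of_le_mul
      (fun s a => mul_nonneg (M.stateOcc_nonneg hπe s) (hπ.1 s a)) ?_ hC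
      (M.stateOcc_mul_le_of_occ_le hπ hπe hcov) hΔ
    simp only [← mul_sum, hπ.2, mul_one, ← M.sum_occ_eq_stateOcc hπe, M.sum_occ hπe]
  have hmain : (1 - M.disc) * (M.scalarV πe Qe - M.scalarV π Q) ≤ T + 2 * √(C * Δ) := by
    rw [M.performance_difference hπe hQ hQe, M.sum_occ_mul_sub_vOf_eq hπe π Q f]
    linarith [neg_abs_le (∑ s, ∑ a, M.occ πe s a * (f s a - Q s a)),
      le_abs_self (∑ s, ∑ a, M.stateOcc πe s * π s a * (f s a - Q s a))]
  have hγ : 0 < 1 - M.disc := sub_pos.2 M.disc_lt_one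
  calc M.scalarV πe Qe - M.scalarV π Q
      = (1 - M.disc) * (M.scalarV πe Qe - M.scalarV π Q) / (1 - M.disc) := by field_simp
    _ ≤ (T + 2 * √(C * Δ)) / (1 - M.disc) := div_le_div_of_nonneg_right hmain hγ.le
    _ = 1 / (1 - M.disc) * T + 2 / (1 - M.disc) * √(C * Δ) := by ring
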